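/- The joint significance test with rejection region R_JS = {(x, y) : |x| ≥ z_{1−α/2}, |y| ≥ z_{1−α/2}} satisfies sup over null parameters of the rejection probability equal to α, attained in the limit along an axis, and min over null parameters (δ_x δ_y = 0) of the rejection probability equal to α², attained at the origin; hence its worst-case type-2 error over the alternative is 1 − α², i.e., inf_{δ_x δ_y ≠ 0} P((Z_x, Z_y) ∈ R_JS) = α². -/

import Mathlib

open MeasureTheory ProbabilityTheory Set Filter Pointwise

/-- The standard normal cumulative distribution function Φ. -/
noncomputable def stdPhi (x : ℝ) : ℝ := ((gaussianReal 0 1) (Set.Iic x)).toReal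

/-- The inverse Φ⁻¹ of the standard normal CDF. -/
noncomputable def stdPhiInv : ℝ → ℝ := Function.invFun stdPhi

/-- The law of (Z_x, Z_y) ~ N((dx, dy), I₂). -/
noncomputable def gauss2 (dx dy : ℝ) : Measure (ℝ × ℝ) :=
  (gaussianReal dx 1).prod (gaussianReal dy 1)

/-- The joint significance rejection region {(x,y) : |x| ≥ z_{1−α/2}, |y| ≥ z_{1−α/2}}. -/
noncomputable def RJS (α : ℝ) : Set (ℝ × ℝ) :=
  {p : ℝ × ℝ | stdPhiInv (1 - α / 2) ≤ |p.1| ∧ stdPhiInv (1 - α / 2) ≤ |p.2|}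

lemma phi_int : Integrable (gaussianPDFReal 0 1) := integrable_gaussianPDFReal 0 1

lemma stdPhi_eq (x : ℝ) : stdPhi x = ∫ t in Set.Iic x, gaussianPDFReal 0 1 t := by
  rw [stdPhi, gaussianReal_apply_eq_integral 0 one_ne_zero,
    ENNReal.toReal_ofReal (integral_nonneg fun t => gaussianPDFReal_nonneg 0 1 t)]

lemma stdPhi_sub (a b : ℝ) :
    stdPhi b - stdPhi a = ∫ t in a..b, gaussianPDFReal 0 1 t := by
  rw [stdPhi_eq, stdPhi_eq]
  exact intervalIntegral.integral_Iic_sub_Iic phi_int.integrableOn phi_int.integrableOn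

lemma stdPhi_continuous : Continuous stdPhi := by
  have h := phi_int.continuous_primitive 0
  have : stdPhi = fun b => (∫ t in (0:ℝ)..b, gaussianPDFReal 0 1 t) + stdPhi 0 := by
    funext b; rw [← stdPhi_sub]; ring
  rw [this]
  exact h.add continuous_const

lemma stdPhi_strictMono : StrictMono stdPhi := by
  intro a b hab
  have h : 0 < ∫ t in a..b, gaussianPDFReal 0 1 t := by
    apply intervalIntegral.intervalIntegral_pos_of_pos_on
      phi_int.intervalIntegrable
      (fun x _ => gaussianPDFReal_pos 0 1 x one_ne_zero) hab
  have := stdPhi_sub a b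
  linarith

lemma stdPhi_neg (x : ℝ) : stdPhi (-x) = 1 - stdPhi x := by
  have heven : ∀ t : ℝ, gaussianPDFReal 0 1 (-t) = gaussianPDFReal 0 1 t := by
    intro t; simp [gaussianPDFReal, neg_sq]
  have h1 : (∫ t in Set.Iic x, gaussianPDFReal 0 1 t)
      + ∫ t in Set.Ioi x, gaussianPDFReal 0 1 t = 1 := by
    rw [intervalIntegral.integral_Iic_add_Ioi phi_int.integrableOn phi_int.integrableOn]
    exact integral_gaussianPDFReal_eq_one 0 one_ne_zero
  have h2 : (∫ t in Set.Iic (-x), gaussianPDFReal 0 1 t)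
      = ∫ t in Set.Ioi x, gaussianPDFReal 0 1 t := by
    rw [← integral_comp_neg_Ioi]
    simp_rw [heven]
  rw [stdPhi_eq, stdPhi_eq, h2]; linarith

lemma stdPhi_zero : stdPhi 0 = 1/2 := by
  have := stdPhi_neg 0
  rw [neg_zero] at this; linarith

lemma stdPhi_lt_one (x : ℝ) : stdPhi x < 1 := by
  have h := stdPhi_neg (-(x+1))
  have h2 := stdPhi_strictMono (show x < x + 1 by linarith)
  have h3 : 0 < stdPhi (-(x+1)) := by
    rw [stdPhi_eq]
    exact setIntegral_pos_iff_support_of_nonneg_ae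
      (ae_of_all _ fun t => gaussianPDFReal_nonneg 0 1 t) phi_int.integrableOn |>.mpr
      (by
        have : Function.support (gaussianPDFReal 0 1) = Set.univ := by
          ext t; simp [Function.mem_support, (gaussianPDFReal_pos 0 1 t one_ne_zero).ne']
        rw [this]
        simpa using measure_Iic_pos (volume : Measure ℝ))
  rw [neg_neg] at h
  linarith

lemma stdPhi_pos (x : ℝ) : 0 < stdPhi x := by
  have := stdPhi_lt_one (-x)
  have h := stdPhi_neg x
  linarith

lemma stdPhi_tendsto_atTop : Tendsto stdPhi atTop (nhds 1) := by
  have h := tendsto_measure_Iic_atTop (gaussianReal 0 1)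
  rw [measure_univ] at h
  have := (ENNReal.tendsto_toReal (by simp : (1:ENNReal) ≠ ⊤)).comp h
  exact this

lemma stdPhi_tendsto_atBot : Tendsto stdPhi atBot (nhds 0) := by
  have h : Tendsto (fun x : ℝ => 1 - stdPhi (-x)) atBot (nhds 0) := by
    have h1 : Tendsto (fun x : ℝ => stdPhi (-x)) atBot (nhds 1) :=
      stdPhi_tendsto_atTop.comp tendsto_neg_atBot_atTop
    have := (tendsto_const_nhds (x := (1:ℝ)) (f := atBot)).sub h1
    simpa using this
  refine h.congr fun x => ?_
  have := stdPhi_neg (-x)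
  rw [neg_neg] at this; linarith

lemma phi_anti {u v : ℝ} (h1 : -v ≤ u) (h2 : u ≤ v) :
    gaussianPDFReal 0 1 v ≤ gaussianPDFReal 0 1 u := by
  unfold gaussianPDFReal
  apply mul_le_mul_of_nonneg_left _ (by positivity)
  apply Real.exp_le_exp.mpr
  have : u ^ 2 ≤ v ^ 2 := sq_le_sq' h1 h2
  simp only [sub_zero]
  push_cast
  nlinarith

lemma stdPhi_key {c δ : ℝ} (hc : 0 ≤ c) (hδ : 0 ≤ δ) :
    stdPhi (c + δ) - stdPhi c ≤ stdPhi c - stdPhi (c - δ) := by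
  rw [stdPhi_sub, stdPhi_sub]
  have hL : (∫ t in c..(c+δ), gaussianPDFReal 0 1 t)
      = ∫ u in (-c)..(δ-c), gaussianPDFReal 0 1 (u + 2*c) := by
    rw [intervalIntegral.integral_comp_add_right]
    congr 1 <;> ring
  have hR : (∫ t in (c-δ)..c, gaussianPDFReal 0 1 t)
      = ∫ u in (-c)..(δ-c), gaussianPDFReal 0 1 u := by
    have he : (∫ u in (-c)..(δ-c), gaussianPDFReal 0 1 u)
        = ∫ u in (-c)..(δ-c), gaussianPDFReal 0 1 (-u) := by
      apply intervalIntegral.integral_congr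
      intro u _; simp [gaussianPDFReal, neg_sq]
    rw [he, intervalIntegral.integral_comp_neg]
    congr 1 <;> ring
  rw [hL, hR]
  apply intervalIntegral.integral_mono_on (by linarith)
  · exact (phi_int.comp_add_right (2*c)).intervalIntegrable
  · exact phi_int.intervalIntegrable
  · rintro x ⟨h1, h2⟩
    exact phi_anti (by linarith) (by linarith)

lemma gaussian_Iic (δ x : ℝ) : ((gaussianReal δ 1) (Set.Iic x)).toReal = stdPhi (x - δ) := by
  have hmap : gaussianReal δ 1 = (gaussianReal 0 1).map (· + δ) := by
    rw [gaussianReal_map_add_const]; norm_num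
  rw [hmap, Measure.map_apply (measurable_id'.add_const δ) measurableSet_Iic]
  have : ((· + δ) ⁻¹' Set.Iic x) = Set.Iic (x - δ) := by
    ext t; simp [le_sub_iff_add_le]
  rw [this]; rfl

lemma gaussian_singleton (δ x : ℝ) : (gaussianReal δ 1) {x} = 0 :=
  gaussianReal_absolutelyContinuous δ one_ne_zero (measure_singleton x)

lemma gaussian_S (δ c : ℝ) (hc : 0 < c) :
    ((gaussianReal δ 1) (Set.Iic (-c) ∪ Set.Ici c)).toReal
      = 2 - stdPhi (c + δ) - stdPhi (c - δ) := by
  set μ := gaussianReal δ 1 with hμ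
  have hdisj : Disjoint (Set.Iic (-c)) (Set.Ici c) :=
    Set.Iic_disjoint_Ici.mpr (by linarith)
  have hIio : μ (Set.Iio c) = μ (Set.Iic c) := by
    have : Set.Iic c = Set.Iio c ∪ {c} := by
      ext t; simp [le_iff_lt_or_eq]
    rw [this]
    refine le_antisymm (measure_mono Set.subset_union_left) ?_
    calc μ (Set.Iio c ∪ {c}) ≤ μ (Set.Iio c) + μ {c} := measure_union_le _ _
      _ = μ (Set.Iio c) := by rw [hμ, gaussian_singleton, add_zero]
  have hIci : (μ (Set.Ici c)).toReal = 1 - stdPhi (c - δ) := by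
    have h1 : μ (Set.Ici c) = 1 - μ (Set.Iio c) := by
      rw [← Set.compl_Iio, prob_compl_eq_one_sub measurableSet_Iio]
    rw [h1, ENNReal.toReal_sub_of_le (by rw [hIio]; exact prob_le_one) (by simp),
      ENNReal.toReal_one, hIio, gaussian_Iic]
  have hIic : (μ (Set.Iic (-c))).toReal = 1 - stdPhi (c + δ) := by
    rw [hμ, gaussian_Iic]
    have := stdPhi_neg (c + δ)
    rw [show -(c+δ) = -c - δ by ring] at this
    linarith
  rw [measure_union hdisj measurableSet_Ici,
    ENNReal.toReal_add (measure_ne_top _ _) (measure_ne_top _ _), hIic, hIci]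
  ring


/-- The joint significance test has supremum rejection probability α over the null
{δ_x δ_y = 0} (approached in the limit along an axis), minimum α² over the null
(attained at the origin), and infimum α² over the alternative {δ_x δ_y ≠ 0}; hence its
worst-case type-2 error is 1 − α². -/
theorem stmt9 (α : ℝ) (hα : α ∈ Set.Ioo (0 : ℝ) 1) :
    IsLUB {p : ℝ | ∃ δx δy : ℝ, δx * δy = 0 ∧ p = ((gauss2 δx δy) (RJS α)).toReal} α ∧
    IsLeast {p : ℝ | ∃ δx δy : ℝ, δx * δy = 0 ∧ p = ((gauss2 δx δy) (RJS α)).toReal}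
      (α ^ 2) ∧
    ((gauss2 0 0) (RJS α)).toReal = α ^ 2 ∧
    sInf {p : ℝ | ∃ δx δy : ℝ, δx * δy ≠ 0 ∧ p = ((gauss2 δx δy) (RJS α)).toReal}
      = α ^ 2 := by
  obtain ⟨hα0, hα1⟩ := hα
  set c := stdPhiInv (1 - α / 2) with hcdef
  have hrange : ∃ x, stdPhi x = 1 - α / 2 := by
    obtain ⟨a, ha⟩ := (stdPhi_tendsto_atBot.eventually_lt_const
      (show (0:ℝ) < 1 - α / 2 by linarith)).exists
    obtain ⟨b, hb⟩ := (stdPhi_tendsto_atTop.eventually_const_lt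
      (show 1 - α / 2 < 1 by linarith)).exists
    have hab : a ≤ b := le_of_lt (stdPhi_strictMono.lt_iff_lt.mp (ha.trans hb))
    have := intermediate_value_Icc hab stdPhi_continuous.continuousOn
    obtain ⟨x, _, hx⟩ := this ⟨ha.le, hb.le⟩
    exact ⟨x, hx⟩
  have hc : stdPhi c = 1 - α / 2 := Function.invFun_eq hrange
  have hcpos : 0 < c := by
    apply stdPhi_strictMono.lt_iff_lt.mp
    rw [stdPhi_zero, hc]; linarith
  set S : Set ℝ := Set.Iic (-c) ∪ Set.Ici c with hSdef
  have hRJS : RJS α = S ×ˢ S := by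
    ext ⟨x, y⟩
    simp only [RJS, Set.mem_setOf_eq, Set.mem_prod, hSdef, Set.mem_union, Set.mem_Iic,
      Set.mem_Ici, le_abs, ← hcdef, le_neg]
    tauto
  set g : ℝ → ℝ := fun δ => 2 - stdPhi (c + δ) - stdPhi (c - δ) with hgdef
  have hgS : ∀ δ, g δ = ((gaussianReal δ 1) S).toReal := fun δ => (gaussian_S δ c hcpos).symm
  have hgauss : ∀ δx δy, ((gauss2 δx δy) (RJS α)).toReal = g δx * g δy := by
    intro δx δy
    rw [gauss2, hRJS, Measure.prod_prod, ENNReal.toReal_mul, hgS, hgS]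
  have hg1 : ∀ δ, g δ ≤ 1 := by
    intro δ
    rw [hgS]
    exact ENNReal.toReal_le_of_le_ofReal one_pos.le (by simpa using prob_le_one)
  have hgnn : ∀ δ, 0 ≤ g δ := fun δ => by rw [hgS]; exact ENNReal.toReal_nonneg
  have hgα : g 0 = α := by rw [hgdef]; simp only [add_zero, sub_zero, hc]; ring
  have hgge : ∀ δ, α ≤ g δ := by
    intro δ
    rcases le_total 0 δ with hδ | hδ
    · have key := stdPhi_key hcpos.le hδ
      simp only [hgdef]
      linarith
    · have key := stdPhi_key hcpos.le (neg_nonneg.mpr hδ)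
      have e1 : c + -δ = c - δ := by ring
      have e2 : c - -δ = c + δ := by ring
      rw [e1, e2] at key
      simp only [hgdef]
      linarith
  have hgcont : Continuous g := by
    apply Continuous.sub
    · exact continuous_const.sub (stdPhi_continuous.comp (continuous_const.add continuous_id))
    · exact stdPhi_continuous.comp (continuous_const.sub continuous_id)
  have hgtop : Tendsto g atTop (nhds 1) := by
    have h1 : Tendsto (fun δ : ℝ => stdPhi (c + δ)) atTop (nhds 1) :=
      stdPhi_tendsto_atTop.comp (tendsto_atTop_add_const_left atTop c tendsto_id)
    have h2 : Tendsto (fun δ : ℝ => stdPhi (c - δ)) atTop (nhds 0) := by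
      apply stdPhi_tendsto_atBot.comp
      exact (tendsto_atBot_add_const_left atTop c tendsto_neg_atTop_atBot).congr fun x => (sub_eq_add_neg c x).symm
    have ht := (tendsto_const_nhds (x := (2:ℝ)) (f := atTop)).sub h1 |>.sub h2
    rw [hgdef]
    have e : (2:ℝ) - 1 - 0 = 1 := by norm_num
    rw [← e]
    exact ht
  have hNdesc : ∀ p : ℝ,
      (∃ δx δy : ℝ, δx * δy = 0 ∧ p = ((gauss2 δx δy) (RJS α)).toReal) ↔ ∃ δ, p = α * g δ := by
    intro p
    constructor
    · rintro ⟨δx, δy, h0, rfl⟩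
      rcases mul_eq_zero.mp h0 with h | h
      · exact ⟨δy, by rw [hgauss, h, hgα]⟩
      · exact ⟨δx, by rw [hgauss, h, hgα, mul_comm]⟩
    · rintro ⟨δ, rfl⟩
      exact ⟨0, δ, by simp, by rw [hgauss, hgα]⟩
  refine ⟨⟨?_, ?_⟩, ⟨?_, ?_⟩, ?_, ?_⟩
  · rintro p hp
    obtain ⟨δ, rfl⟩ := (hNdesc p).mp hp
    calc α * g δ ≤ α * 1 := mul_le_mul_of_nonneg_left (hg1 δ) hα0.le
      _ = α := mul_one α
  · intro b hb
    have hev : ∀ δ : ℝ, α * g δ ≤ b := fun δ => hb ((hNdesc _).mpr ⟨δ, rfl⟩)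
    have ht : Tendsto (fun δ => α * g δ) atTop (nhds (α * 1)) := tendsto_const_nhds.mul hgtop
    have := le_of_tendsto ht (Eventually.of_forall hev)
    linarith [this]
  · exact (hNdesc _).mpr ⟨0, by rw [hgα]; ring⟩
  · rintro p hp
    obtain ⟨δ, rfl⟩ := (hNdesc p).mp hp
    calc α ^ 2 = α * α := sq α
      _ ≤ α * g δ := mul_le_mul_of_nonneg_left (hgge δ) hα0.le
  · rw [hgauss, hgα]; ring
  · have hAlb : ∀ p ∈ {p : ℝ | ∃ δx δy : ℝ, δx * δy ≠ 0 ∧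
        p = ((gauss2 δx δy) (RJS α)).toReal}, α ^ 2 ≤ p := by
      rintro p ⟨δx, δy, hne, rfl⟩
      rw [hgauss, sq]
      exact mul_le_mul (hgge δx) (hgge δy) hα0.le (hgnn δx)
    have hmem : ∀ δ : ℝ, δ ≠ 0 → g δ * g δ ∈ {p : ℝ | ∃ δx δy : ℝ, δx * δy ≠ 0 ∧
        p = ((gauss2 δx δy) (RJS α)).toReal} :=
      fun δ hδ => ⟨δ, δ, mul_ne_zero hδ hδ, (hgauss δ δ).symm⟩
    have hbdd : BddBelow {p : ℝ | ∃ δx δy : ℝ, δx * δy ≠ 0 ∧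
        p = ((gauss2 δx δy) (RJS α)).toReal} := ⟨α ^ 2, fun p hp => hAlb p hp⟩
    apply le_antisymm
    · have ht : Tendsto (fun δ => g δ * g δ) (nhdsWithin (0:ℝ) ({0}ᶜ)) (nhds (α ^ 2)) := by
        have := ((hgcont.mul hgcont).tendsto 0).mono_left
          (nhdsWithin_le_nhds (s := ({0}ᶜ : Set ℝ)))
        rw [Pi.mul_apply, hgα] at this
        rw [sq]; exact this
      refine ge_of_tendsto ht ?_
      filter_upwards [self_mem_nhdsWithin] with δ hδ
      exact csInf_le hbdd (hmem δ (by simpa using hδ))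
    · exact le_csInf ⟨g 1 * g 1, hmem 1 one_ne_zero⟩ hAlb
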